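/- arXiv:2510.12145 — 4 statements merged into one kernel-verified Lean document; each statement's English description precedes it below -/
import Mathlib

section
/- For all integers n ≥ 1, |P(n) - p·α^n| < α^(-n/2), where α is the real root of x^3 - x - 1, and p = (1+α)/(-α^2 + 3α + 1). -/
/-!
The error `E n = P(n) - p α^n` satisfies the Padovan recurrence, and the choice of `p` kills its
component along `α^n`, so `E` satisfies the second-order recurrence whose characteristic roots
are the two complex conjugate roots `β, β̄` of `x^3 - x - 1`, with `|β|^2 = 1/α = α^2 - 1`.
The quadratic form `E(n+1)^2 + α E(n+1) E(n) + (α^2 - 1) E(n)^2` is therefore multiplied by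
`α^2 - 1` at each step; it is positive definite since `α^3 < 4`, and a numerical check at
`n = 0` gives `E(n)^2 < (α^2 - 1)^n = α^(-n)`.
-/

def padovan : ℕ → ℕ
  | 0 => 1
  | 1 => 1
  | 2 => 1
  | n + 3 => padovan (n + 1) + padovan n

section SecondOrderRecurrence

variable {R : Type*} [CommRing R]

/-- For a solution of `E (n + 2) = -a E (n + 1) - b E n`, this is `|E (n + 1) - β E n|^2`
where `β, β̄` are the characteristic roots. -/
def recurrenceForm (a b : R) (E : ℕ → R) (n : ℕ) : R :=
  E (n + 1) ^ 2 + a * E (n + 1) * E n + b * E n ^ 2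

theorem recurrenceForm_succ {a b : R} {E : ℕ → R}
    (hE : ∀ n, E (n + 2) = -a * E (n + 1) - b * E n) (n : ℕ) :
    recurrenceForm a b E (n + 1) = b * recurrenceForm a b E n := by
  simp only [recurrenceForm, hE n]
  ring

theorem recurrenceForm_eq_pow_mul {a b : R} {E : ℕ → R}
    (hE : ∀ n, E (n + 2) = -a * E (n + 1) - b * E n) (n : ℕ) :
    recurrenceForm a b E n = b ^ n * recurrenceForm a b E 0 := by
  induction n with
  | zero => simp
  | succ n ih => rw [recurrenceForm_succ hE, ih, pow_succ]; ring

end SecondOrderRecurrence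

section OrderedField

variable {K : Type*} [Field K] [LinearOrder K] [IsStrictOrderedRing K]

theorem sub_sq_div_four_mul_sq_le_recurrenceForm (a b : K) (E : ℕ → K) (n : ℕ) :
    (b - a ^ 2 / 4) * E n ^ 2 ≤ recurrenceForm a b E n := by
  unfold recurrenceForm
  nlinarith [sq_nonneg (E (n + 1) + a / 2 * E n)]

theorem sq_lt_pow_of_recurrence {a b : K} {E : ℕ → K}
    (hE : ∀ n, E (n + 2) = -a * E (n + 1) - b * E n) (hab : a ^ 2 < 4 * b)
    (h₀ : recurrenceForm a b E 0 < b - a ^ 2 / 4) (n : ℕ) :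
    E n ^ 2 < b ^ n := by
  have hd : 0 < b - a ^ 2 / 4 := by linarith
  have hbn : 0 < b ^ n := pow_pos (by nlinarith [sq_nonneg a]) n
  refine lt_of_mul_lt_mul_left ?_ hd.le
  calc (b - a ^ 2 / 4) * E n ^ 2 ≤ recurrenceForm a b E n :=
        sub_sq_div_four_mul_sq_le_recurrenceForm a b E n
    _ = b ^ n * recurrenceForm a b E 0 := recurrenceForm_eq_pow_mul hE n
    _ < b ^ n * (b - a ^ 2 / 4) := mul_lt_mul_of_pos_left h₀ hbn
    _ = (b - a ^ 2 / 4) * b ^ n := mul_comm _ _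

end OrderedField

/-- The factorisation `x^3 - x - 1 = (x - α) (x^2 + α x + α^2 - 1)` lets a solution of the
third-order recurrence with no component along `α^n` satisfy the second-order one. -/
theorem second_order_of_padovan_recurrence {R : Type*} [CommRing R] {α : R}
    (hα : α ^ 3 = α + 1) {E : ℕ → R} (hE : ∀ n, E (n + 3) = E (n + 1) + E n)
    (h₂ : E 2 = -α * E 1 - (α ^ 2 - 1) * E 0) (n : ℕ) :
    E (n + 2) = -α * E (n + 1) - (α ^ 2 - 1) * E n := by
  induction n with
  | zero => exact h₂
  | succ n ih => rw [hE, ih]; linear_combination (-E n) * hα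

theorem one_lt_of_pow_three_eq {α : ℝ} (hα : α ^ 3 = α + 1) : 1 < α := by
  nlinarith [sq_nonneg (α - 1), sq_nonneg (α + 1), sq_nonneg α]

theorem padovan_root_bounds {α : ℝ} (hα : α ^ 3 = α + 1) : 1.32 < α ∧ α < 1.33 := by
  have := one_lt_of_pow_three_eq hα
  constructor <;> nlinarith [sq_nonneg (α - 1.32), sq_nonneg (α - 1.33)]

theorem padovan_add_three (n : ℕ) : padovan (n + 3) = padovan (n + 1) + padovan n := rfl

def padovanError (α p : ℝ) (n : ℕ) : ℝ := padovan n - p * α ^ n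

theorem padovanError_add_three {α : ℝ} (hα : α ^ 3 = α + 1) (p : ℝ) (n : ℕ) :
    padovanError α p (n + 3) = padovanError α p (n + 1) + padovanError α p n := by
  simp only [padovanError, padovan_add_three, Nat.cast_add]
  linear_combination (-p * α ^ n) * hα

/-- `p` is exactly the value for which the error has no component along `α^n`. -/
theorem padovanError_two {α p : ℝ} (hα : α ^ 3 = α + 1)
    (hp : p = (1 + α) / (-α ^ 2 + 3 * α + 1)) :
    padovanError α p 2 = -α * padovanError α p 1 - (α ^ 2 - 1) * padovanError α p 0 := by
  have hd : -α ^ 2 + 3 * α + 1 ≠ 0 := by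
    obtain ⟨h₁, h₂⟩ := padovan_root_bounds hα
    nlinarith
  have hp' : p * (-α ^ 2 + 3 * α + 1) = 1 + α := by rw [hp, div_mul_cancel₀ _ hd]
  simp only [padovanError, padovan, Nat.cast_one, pow_zero, pow_one]
  linear_combination (-α) * hp' - p * hα

theorem recurrenceForm_padovanError_zero_lt {α p : ℝ} (hα : α ^ 3 = α + 1)
    (hp : p = (1 + α) / (-α ^ 2 + 3 * α + 1)) :
    recurrenceForm α (α ^ 2 - 1) (padovanError α p) 0 < (α ^ 2 - 1) - α ^ 2 / 4 := by
  obtain ⟨h₁, h₂⟩ := padovan_root_bounds hα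
  have hd : 0 < -α ^ 2 + 3 * α + 1 := by nlinarith
  have hpl : 0.71 < p := by rw [hp, lt_div_iff₀ hd]; nlinarith
  have hpu : p < 0.73 := by rw [hp, div_lt_iff₀ hd]; nlinarith
  simp only [recurrenceForm, padovanError, padovan, Nat.cast_one, pow_zero, pow_one, zero_add]
  nlinarith [mul_pos (sub_pos.2 h₁) (sub_pos.2 hpl)]

theorem inv_eq_sq_sub_one_of_pow_three_eq {α : ℝ} (hα : α ^ 3 = α + 1) : α⁻¹ = α ^ 2 - 1 := by
  refine inv_eq_of_mul_eq_one_right ?_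
  linear_combination hα

theorem rpow_neg_half_sq {α : ℝ} (hα : 0 < α) (n : ℕ) :
    (α ^ (-(n : ℝ) / 2)) ^ 2 = α⁻¹ ^ n := by
  rw [← Real.rpow_natCast _ 2, ← Real.rpow_mul hα.le, inv_pow, ← Real.rpow_natCast α n,
    ← Real.rpow_neg hα.le]
  push_cast
  ring_nf

theorem padovan_binet_error_general (α : ℝ) (hroot : α ^ 3 = α + 1)
    (p : ℝ) (hp : p = (1 + α) / (-α ^ 2 + 3 * α + 1)) :
    ∀ n : ℕ, 1 ≤ n →
      |(padovan n : ℝ) - p * α ^ n| < α ^ (-(n : ℝ) / 2) := by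
  intro n _
  have hα : 0 < α := zero_lt_one.trans (one_lt_of_pow_three_eq hroot)
  have hrec := second_order_of_padovan_recurrence hroot (padovanError_add_three hroot p)
    (padovanError_two hroot hp)
  have hdef : α ^ 2 < 4 * (α ^ 2 - 1) := by nlinarith [(padovan_root_bounds hroot).1]
  have hsq := sq_lt_pow_of_recurrence hrec hdef (recurrenceForm_padovanError_zero_lt hroot hp) n
  refine abs_lt_of_sq_lt_sq ?_ (by positivity)
  rwa [rpow_neg_half_sq hα, inv_eq_sq_sub_one_of_pow_three_eq hroot]

theorem padovan_binet_error (α : ℝ) (hroot : α ^ 3 = α + 1) (hα : 1 < α)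
    (p : ℝ) (hp : p = (1 + α) / (-α ^ 2 + 3 * α + 1)) :
    ∀ n : ℕ, 1 ≤ n →
      |(padovan n : ℝ) - p * α ^ n| < α ^ (-(n : ℝ) / 2) :=
  padovan_binet_error_general α hroot p hp
end

section
/- Let α be the real root of x^3 - x - 1 = 0 and let b ≥ 2 be an integer. Then log b / log α is irrational. -/
/-!
Taking norms from `ℚ(α)` to `ℚ` in `α ^ n = r` with `r` rational gives `N(α) ^ n = r ^ 3`, and
`N(α) = 1` because `x ^ 3 - x - 1` is irreducible (Selmer) with constant term `-1`. Hence
`r ^ 3 = 1`, which is impossible for `r = α ^ n > 1`. A rational value `m / d` of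
`log b / log α` would make `α ^ m = b ^ d` rational.
-/

open Polynomial IntermediateField Real

/-- `(-1) ^ deg * coeff 0` of the minimal polynomial is the norm of `x` from `K⟮x⟯`. -/
theorem minpoly_coeff_zero_pow_of_pow_eq_algebraMap {K L : Type*} [Field K] [Field L]
    [Algebra K L] {x : L} (hx : IsIntegral K x) {n : ℕ} {r : K}
    (h : x ^ n = algebraMap K L r) :
    ((-1) ^ (minpoly K x).natDegree * (minpoly K x).coeff 0) ^ n =
      r ^ (minpoly K x).natDegree := by
  set pb := adjoin.powerBasis hx
  have hgen : pb.gen ^ n = algebraMap K K⟮x⟯ r := Subtype.ext (by simp [pb, h])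
  have := congrArg (Algebra.norm K) hgen
  rwa [map_pow, Algebra.PowerBasis.norm_gen_eq_coeff_zero_minpoly, Algebra.norm_algebraMap,
    pb.finrank, adjoin.powerBasis_dim, adjoin.powerBasis_gen, minpoly_gen] at this

theorem minpoly_rat_eq_of_cube_eq_add_one {α : ℝ} (h : α ^ 3 = α + 1) :
    minpoly ℚ α = X ^ 3 - X - 1 :=
  (minpoly.eq_of_irreducible_of_monic (X_pow_sub_X_sub_one_irreducible_rat (by norm_num))
    (by simp [h]) (by monicity!)).symm

theorem pow_ne_ratCast_of_cube_eq_add_one {α : ℝ} (hroot : α ^ 3 = α + 1) (hα : 1 < α)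
    {n : ℕ} (hn : n ≠ 0) (r : ℚ) : α ^ n ≠ r := by
  intro h
  have hint : IsIntegral ℚ α := by
    rw [← minpoly.ne_zero_iff, minpoly_rat_eq_of_cube_eq_add_one hroot]
    exact (X_pow_sub_X_sub_one_irreducible_rat (by norm_num)).ne_zero
  have hr := minpoly_coeff_zero_pow_of_pow_eq_algebraMap hint h
  have hdeg : (X ^ 3 - X - 1 : ℚ[X]).natDegree = 3 := by compute_degree!
  rw [minpoly_rat_eq_of_cube_eq_add_one hroot] at hr
  norm_num [hdeg] at hr
  have : α ^ (n * 3) = 1 := by rw [pow_mul, h]; exact_mod_cast hr.symm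
  exact (one_lt_pow₀ hα (by positivity)).ne' this

theorem irrational_log_div_log {a c : ℝ} (ha : 1 < a) (hc : 1 < c)
    (h : ∀ m d : ℕ, m ≠ 0 → a ^ m ≠ c ^ d) : Irrational (log c / log a) := by
  rintro ⟨q, hq⟩
  have hloga := log_pos ha
  have hq0 : 0 < q := by exact_mod_cast hq ▸ div_pos (log_pos hc) hloga
  obtain ⟨m, hm⟩ := Int.eq_ofNat_of_zero_le (Rat.num_pos.2 hq0).le
  refine h m q.den (by rintro rfl; simp [hq0.ne'] at hm) ?_
  have hlog : m * log a = q.den * log c := by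
    rw [Rat.cast_def, hm, div_eq_div_iff (by positivity) hloga.ne'] at hq
    push_cast at hq
    linarith
  rw [← exp_log (pow_pos (by linarith) m), ← exp_log (pow_pos (by linarith) q.den), log_pow,
    log_pow, hlog]

theorem irrational_log_ratio_plastic (α : ℝ) (hroot : α ^ 3 = α + 1) (hα : 1 < α)
    (b : ℕ) (hb : 2 ≤ b) :
    Irrational (Real.log b / Real.log α) :=
  irrational_log_div_log hα (Nat.one_lt_cast.2 hb) fun _ d hm ↦ by
    exact_mod_cast pow_ne_ratCast_of_cube_eq_add_one hroot hα hm (b ^ d)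
end

section
/- Let φ be the real root of x^3 - x^2 - 1 = 0 and let b ≥ 2 be an integer. Then log b / log φ is irrational. -/
/-!
If `log b / log φ = m / n` with `m > 0`, then `φ ^ m = b ^ n` is an integer. But reducing `X ^ m`
modulo `X ^ 3 - X ^ 2 - 1` gives `φ ^ m = A φ ^ 2 + B φ + C` with natural coefficients and
`A + B > 0`, and since `X ^ 3 - X ^ 2 - 1` has no rational root it is the minimal polynomial of
`φ`, so `1, φ, φ ^ 2` are linearly independent over `ℚ` and `φ ^ m` is irrational.
-/

open Polynomial

noncomputable def narayanaPoly (R : Type*) [CommRing R] : R[X] := X ^ 3 - X ^ 2 - 1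

section narayanaPoly

variable (R : Type*) [CommRing R]

theorem narayanaPoly_monic : (narayanaPoly R).Monic := by
  unfold narayanaPoly; monicity!

theorem natDegree_narayanaPoly [Nontrivial R] : (narayanaPoly R).natDegree = 3 := by
  unfold narayanaPoly; compute_degree!

variable {R}

theorem aeval_narayanaPoly {A : Type*} [CommRing A] [Algebra R A] (x : A) :
    aeval x (narayanaPoly R) = x ^ 3 - x ^ 2 - 1 := by
  simp [narayanaPoly]

end narayanaPoly

theorem Int.pow_three_ne_sq_add_one (z : ℤ) : z ^ 3 ≠ z ^ 2 + 1 := by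
  intro h
  have hfac : z ^ 2 * (z - 1) = 1 := by linear_combination h
  rcases Int.eq_one_or_neg_one_of_mul_eq_one' hfac with ⟨-, h1⟩ | ⟨hsq, -⟩
  · obtain rfl : z = 2 := by omega
    norm_num at hfac
  · nlinarith

theorem Rat.pow_three_ne_sq_add_one (q : ℚ) : q ^ 3 ≠ q ^ 2 + 1 := by
  intro h
  obtain ⟨z, rfl⟩ : IsLocalization.IsInteger ℤ q :=
    isInteger_of_is_root_of_monic (narayanaPoly_monic ℤ)
      (by rw [aeval_narayanaPoly]; linear_combination h)
  rw [algebraMap_int_eq, eq_intCast] at h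
  exact Int.pow_three_ne_sq_add_one z (by exact_mod_cast h)

theorem irreducible_narayanaPoly : Irreducible (narayanaPoly ℚ) := by
  refine irreducible_of_degree_le_three_of_not_isRoot (by simp [natDegree_narayanaPoly])
    fun q hq ↦ ?_
  rw [IsRoot.def, ← coe_aeval_eq_eval, aeval_narayanaPoly] at hq
  exact Rat.pow_three_ne_sq_add_one q (by linear_combination hq)

section CubicRoot

variable {K : Type*} [Field K] [CharZero K] {x : K}

theorem minpoly_eq_narayanaPoly (hx : x ^ 3 = x ^ 2 + 1) : minpoly ℚ x = narayanaPoly ℚ :=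
  (minpoly.eq_of_irreducible_of_monic irreducible_narayanaPoly
    (by rw [aeval_narayanaPoly]; linear_combination hx) (narayanaPoly_monic ℚ)).symm

theorem eq_zero_of_mul_sq_add_mul_add_eq_zero (hx : x ^ 3 = x ^ 2 + 1) {a b c : ℚ}
    (h : (a : K) * x ^ 2 + b * x + c = 0) : a = 0 ∧ b = 0 ∧ c = 0 := by
  set p : ℚ[X] := C a * X ^ 2 + C b * X + C c
  have hp : p = 0 := by
    by_contra hp
    have hdeg := minpoly.degree_le_of_ne_zero ℚ x hp (by simpa [p] using h)
    rw [minpoly_eq_narayanaPoly hx, degree_eq_natDegree (narayanaPoly_monic ℚ).ne_zero,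
      natDegree_narayanaPoly] at hdeg
    have hp2 : p.degree ≤ 2 := by simp only [p]; compute_degree
    exact absurd (hdeg.trans hp2) (by decide)
  refine ⟨?_, ?_, ?_⟩
  · simpa [p] using congrArg (coeff · 2) hp
  · simpa [p] using congrArg (coeff · 1) hp
  · simpa [p] using congrArg (coeff · 0) hp

end CubicRoot

theorem exists_pow_eq_of_pow_three_eq {R : Type*} [CommSemiring R] {x : R}
    (hx : x ^ 3 = x ^ 2 + 1) {k : ℕ} (hk : 0 < k) :
    ∃ a b c : ℕ, 0 < a + b ∧ x ^ k = a * x ^ 2 + b * x + c := by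
  induction k, hk using Nat.le_induction with
  | base => exact ⟨0, 1, 0, one_pos, by simp⟩
  | succ k _ ih =>
    obtain ⟨a, b, c, hab, hk⟩ := ih
    refine ⟨a + b, c, a, by omega, ?_⟩
    push_cast
    calc x ^ (k + 1) = a * x ^ 3 + b * x ^ 2 + c * x := by rw [pow_succ, hk]; ring
      _ = _ := by rw [hx]; ring

theorem irrational_pow_of_pow_three_eq {φ : ℝ} (hφ : φ ^ 3 = φ ^ 2 + 1) {m : ℕ}
    (hm : 0 < m) : Irrational (φ ^ m) := by
  rintro ⟨q, hq⟩
  obtain ⟨a, b, c, hab, hpow⟩ := exists_pow_eq_of_pow_three_eq hφ hm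
  obtain ⟨ha, hb, -⟩ := eq_zero_of_mul_sq_add_mul_add_eq_zero hφ (a := a) (b := b) (c := c - q)
    (by push_cast; linarith)
  norm_cast at ha hb
  omega

theorem exists_pow_eq_pow_of_log_div_log_eq {x y : ℝ} (hx : 1 < x) (hy : 1 < y) {q : ℚ}
    (hq : Real.log x / Real.log y = q) : ∃ m n : ℕ, 0 < m ∧ x ^ n = y ^ m := by
  have hq0 : 0 < q := by
    have : (0 : ℝ) < q := hq ▸ div_pos (Real.log_pos hx) (Real.log_pos hy)
    exact_mod_cast this
  obtain ⟨m, hm⟩ := Int.eq_ofNat_of_zero_le (Rat.num_pos.mpr hq0).le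
  refine ⟨m, q.den, by have := Rat.num_pos.mpr hq0; omega, ?_⟩
  have hlog : q.den * Real.log x = m * Real.log y := by
    rw [div_eq_iff (Real.log_pos hy).ne', ← Rat.num_div_den q, hm] at hq
    push_cast at hq
    field_simp at hq
    linarith
  apply Real.log_injOn_pos (Set.mem_Ioi.mpr (by positivity)) (Set.mem_Ioi.mpr (by positivity))
  rw [Real.log_pow, Real.log_pow, hlog]

theorem irrational_log_ratio_narayana (φ : ℝ) (hroot : φ ^ 3 = φ ^ 2 + 1) (hφ : 1 < φ)
    (b : ℕ) (hb : 2 ≤ b) :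
    Irrational (Real.log b / Real.log φ) := by
  rintro ⟨q, hq⟩
  have hb1 : (1 : ℝ) < b := by exact_mod_cast hb
  obtain ⟨m, n, hm, hpow⟩ := exists_pow_eq_pow_of_log_div_log_eq hb1 hφ hq.symm
  exact (irrational_pow_of_pow_three_eq hroot hm).ne_nat (b ^ n) (by push_cast; exact hpow.symm)
end

section
/- Let α be the real root of x^3 - x - 1 and p = (1+α)/(-α^2+3α+1). For all integers b ≥ 2, l ≥ 1, n ≥ 0 and either sign choice ±, we have (b ± 1)·b^l ≠ p·α^n. -/
/-- No rational number satisfies q^3 = q + 1. -/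
lemma noRatRoot (q : ℚ) : q ^ 3 ≠ q + 1 := by
  intro h
  set n : ℤ := q.num with hn
  set d : ℤ := (q.den : ℤ) with hd
  have hdpos : (0 : ℤ) < d := by rw [hd]; exact_mod_cast q.pos
  have hqnd : (n : ℚ) = q * d := by
    rw [hn, hd]; push_cast; exact (Rat.mul_den_eq_num q).symm
  have hint : n ^ 3 = n * d ^ 2 + d ^ 3 := by
    have : ((n : ℚ)) ^ 3 = n * d ^ 2 + d ^ 3 := by
      rw [hqnd]; linear_combination (d:ℚ)^3 * h
    exact_mod_cast this
  have hdvd : d ∣ n ^ 3 := ⟨n * d + d ^ 2, by linarith [hint]⟩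
  have hcop : IsCoprime n d := by
    rw [Int.isCoprime_iff_gcd_eq_one]
    exact q.reduced
  have hcop3 : IsCoprime (n ^ 3) d := hcop.pow_left
  have hdu : IsUnit d := hcop3.isUnit_of_dvd' hdvd dvd_rfl
  have hd1 : d = 1 := by
    rcases Int.isUnit_iff.mp hdu with h1 | h1
    · exact h1
    · omega
  have hqn : q = (n : ℚ) := by rw [hqnd, hd1]; push_cast; ring
  have hn3 : n ^ 3 = n + 1 := by
    have : (n:ℚ)^3 = (n:ℚ) + 1 := by rw [← hqn]; exact h
    exact_mod_cast this
  have hdvd1 : n ∣ 1 := ⟨n ^ 2 - 1, by linarith [hn3]⟩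
  rcases Int.isUnit_iff.mp (isUnit_of_dvd_one hdvd1) with h1 | h1 <;>
    rw [h1] at hn3 <;> norm_num at hn3

/-- Recurrence map for the integer coordinates of 23·p·α^n. -/
def thabitT (s : ℤ × ℤ × ℤ) : ℤ × ℤ × ℤ := (s.2.2, s.1 + s.2.2, s.2.1)

def thabitF : ℕ → ℤ × ℤ × ℤ
  | 0 => (3, 1, 7)
  | n + 1 => thabitT (thabitF n)

def thabitTz (s : ZMod 4 × ZMod 4 × ZMod 4) : ZMod 4 × ZMod 4 × ZMod 4 :=
  (s.2.2, s.1 + s.2.2, s.2.1)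

def thabitG : ℕ → ZMod 4 × ZMod 4 × ZMod 4
  | 0 => (3, 1, 3)
  | n + 1 => thabitTz (thabitG n)

lemma thabitFG (n : ℕ) :
    (((thabitF n).1 : ZMod 4), ((thabitF n).2.1 : ZMod 4), ((thabitF n).2.2 : ZMod 4))
      = thabitG n := by
  induction n with
  | zero => decide
  | succ n ih =>
    simp only [thabitF, thabitG, thabitT, thabitTz] at *
    rw [← ih]
    push_cast
    rfl

lemma thabitGper : ∀ n, thabitG (n + 14) = thabitG n := by
  intro n
  induction n with
  | zero => decide
  | succ n ih =>
    show thabitTz (thabitG (n + 14)) = thabitTz (thabitG n)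
    rw [ih]

lemma thabitGmod : ∀ n, thabitG n = thabitG (n % 14) := by
  intro n
  induction n using Nat.strong_induction_on with
  | _ n ih =>
    by_cases h : n < 14
    · rw [Nat.mod_eq_of_lt h]
    · push_neg at h
      obtain ⟨m, rfl⟩ : ∃ m, n = m + 14 := ⟨n - 14, by omega⟩
      rw [thabitGper, ih m (by omega)]
      congr 1
      omega

lemma thabitGsmall : ∀ r, r < 14 → ((thabitG r).2.1, (thabitG r).2.2) ≠ (0, 0) := by
  decide

lemma thabitGne (n : ℕ) : ((thabitG n).2.1, (thabitG n).2.2) ≠ (0, 0) := by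
  rw [thabitGmod n]
  exact thabitGsmall _ (Nat.mod_lt _ (by norm_num))

theorem thabit_ne_p_alpha_pow (α : ℝ) (hroot : α ^ 3 = α + 1) (hα : 1 < α)
    (p : ℝ) (hp : p = (1 + α) / (-α ^ 2 + 3 * α + 1)) :
    ∀ b l n : ℕ, 2 ≤ b → 1 ≤ l → ∀ e : ℤ, (e = 1 ∨ e = -1) →
      ((b : ℝ) + e) * (b : ℝ) ^ l ≠ p * α ^ n := by
  -- basic bounds on α
  have hα2 : α < 2 := by nlinarith
  have hden : -α ^ 2 + 3 * α + 1 > 0 := by nlinarith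
  -- 23 p = 3 + α + 7 α²
  have hp23 : 23 * p = 3 + α + 7 * α ^ 2 := by
    rw [hp, mul_div_assoc', div_eq_iff (ne_of_gt hden)]
    linear_combination (7 * α - 20) * hroot
  -- irrationality: α is not rational
  have hairr : ∀ q : ℚ, α ≠ (q : ℝ) := by
    intro q hq
    apply noRatRoot q
    have : ((q : ℝ)) ^ 3 = (q : ℝ) + 1 := by rw [← hq]; exact hroot
    exact_mod_cast this
  -- α² is not a rational combination of α and 1
  have hsq : ∀ c d : ℚ, α ^ 2 ≠ (c : ℝ) * α + (d : ℝ) := by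
    intro c d h2
    have e1 : α ^ 2 - (c:ℝ) * α - (d:ℝ) = 0 := by linarith
    have key : ((c : ℝ) ^ 2 + (d:ℝ) - 1) * α = 1 - (c:ℝ) * (d:ℝ) := by
      linear_combination hroot - (α + (c:ℝ)) * e1
    by_cases hc : (c^2 + d - 1 : ℚ) = 0
    · have hc' : ((c:ℝ)^2 + (d:ℝ) - 1) = 0 := by exact_mod_cast hc
      have hcd : (c * d : ℚ) = 1 := by
        have h5 : ((c*d : ℚ) : ℝ) = 1 := by push_cast; rw [hc', zero_mul] at key; linarith
        exact_mod_cast h5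
      apply noRatRoot (-c)
      have hd' : d = 1 - c^2 := by linarith [sub_eq_zero.mp hc]
      rw [hd'] at hcd
      linear_combination hcd
    · have hc' : ((c:ℝ)^2 + (d:ℝ) - 1) ≠ 0 := by
        intro h0
        apply hc
        exact_mod_cast h0
      apply hairr ((1 - c*d) / (c^2 + d - 1))
      push_cast
      rw [eq_div_iff hc']
      linarith [key]
  -- linear independence over ℤ
  have hindep : ∀ A B C : ℤ, (A : ℝ) + B * α + C * α ^ 2 = 0 → B = 0 ∧ C = 0 := by
    intro A B C h0
    by_cases hC : C = 0
    · subst hC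
      by_cases hB : B = 0
      · exact ⟨hB, rfl⟩
      · exfalso
        apply hairr (-(A : ℚ) / B)
        have hB' : ((B:ℤ) : ℝ) ≠ 0 := by exact_mod_cast hB
        push_cast
        rw [eq_div_iff hB']
        push_cast at h0
        linear_combination h0
    · exfalso
      apply hsq (-(B:ℚ)/C) (-(A:ℚ)/C)
      have hC' : ((C:ℤ) : ℝ) ≠ 0 := by exact_mod_cast hC
      push_cast
      rw [div_mul_eq_mul_div, ← add_div, eq_div_iff hC']
      push_cast at h0
      linear_combination h0
  -- the coordinate identity
  have hcoord : ∀ n : ℕ,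
      ((thabitF n).1 : ℝ) + (thabitF n).2.1 * α + (thabitF n).2.2 * α ^ 2
        = 23 * p * α ^ n := by
    intro n
    induction n with
    | zero => norm_num [thabitF]; linarith [hp23]
    | succ n ih =>
      simp only [thabitF, thabitT]
      have hstep : 23 * p * α ^ (n + 1) = 23 * p * α ^ n * α := by ring
      rw [hstep, ← ih]
      push_cast
      linear_combination (-((thabitF n).2.2 : ℝ)) * hroot
  -- main argument
  intro b l n hb hl e he h
  set A := (thabitF n).1 with hA
  set B := (thabitF n).2.1 with hB
  set C := (thabitF n).2.2 with hC
  have key : ((A - 23 * (((b:ℤ) + e) * (b:ℤ)^l) : ℤ) : ℝ) + B * α + C * α ^ 2 = 0 := by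
    push_cast
    have hcn := hcoord n
    linear_combination hcn - 23 * h
  obtain ⟨hB0, hC0⟩ := hindep _ _ _ key
  have hne := thabitGne n
  rw [← thabitFG n] at hne
  apply hne
  rw [← hB, ← hC, hB0, hC0]
  simp
end
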